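/- For every matching M between a duplicate-free list of bids B and a duplicate-free list of asks A, there exists a fair matching M' between B and A with the same total traded quantity, Q(M') = Q(M). Moreover, M' can be obtained by first applying a fair-on-asks procedure and then a fair-on-bids procedure, each preserving total volume. -/

import Mathlib

structure Bid where
  id : ℕ
  timestamp : ℕ
  quantity : ℕ
  price : ℕ
deriving DecidableEq

structure Ask where
  id : ℕ
  timestamp : ℕ
  quantity : ℕ
  price : ℕ
deriving DecidableEq

structure Transaction where
  bid : Bid
  ask : Ask
  quantity : ℕ
  price : ℕ
deriving DecidableEq

/-- Total traded quantity of a list of transactions. -/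
def Qty (M : List Transaction) : ℕ := (M.map Transaction.quantity).sum

/-- Total traded quantity of bid `b` in `M`. -/
def QtyBid (b : Bid) (M : List Transaction) : ℕ :=
  ((M.filter (fun m => m.bid == b)).map Transaction.quantity).sum

/-- Total traded quantity of ask `a` in `M`. -/
def QtyAsk (a : Ask) (M : List Transaction) : ℕ :=
  ((M.filter (fun m => m.ask == a)).map Transaction.quantity).sum

/-- Total traded quantity between bid `b` and ask `a` in `M`. -/
def QtyBidAsk (b : Bid) (a : Ask) (M : List Transaction) : ℕ :=
  ((M.filter (fun m => m.bid == b && m.ask == a)).map Transaction.quantity).sum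

/-- Sum of quantities of a list of bids. -/
def QB (B : List Bid) : ℕ := (B.map Bid.quantity).sum

/-- Sum of quantities of a list of asks. -/
def QA (A : List Ask) : ℕ := (A.map Ask.quantity).sum

/-- `M` is a matching between bids `B` and asks `A`. -/
def Matching (B : List Bid) (A : List Ask) (M : List Transaction) : Prop :=
  (∀ m ∈ M, m.ask.price ≤ m.bid.price) ∧
  (∀ m ∈ M, m.bid ∈ B) ∧
  (∀ m ∈ M, m.ask ∈ A) ∧
  (∀ b ∈ B, QtyBid b M ≤ b.quantity) ∧
  (∀ a ∈ A, QtyAsk a M ≤ a.quantity)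

/-- Individual rationality. -/
def IsIR (M : List Transaction) : Prop :=
  ∀ m ∈ M, m.ask.price ≤ m.price ∧ m.price ≤ m.bid.price

/-- Uniformity: all trade prices equal. -/
def IsUniform (M : List Transaction) : Prop :=
  ∀ m1 ∈ M, ∀ m2 ∈ M, m1.price = m2.price

/-- `b1` is more competitive than `b2`. -/
def MoreCompetitiveBid (b1 b2 : Bid) : Prop :=
  b2.price < b1.price ∨ (b1.price = b2.price ∧ b1.timestamp < b2.timestamp)

/-- `a1` is more competitive than `a2`. -/
def MoreCompetitiveAsk (a1 a2 : Ask) : Prop :=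
  a1.price < a2.price ∨ (a1.price = a2.price ∧ a1.timestamp < a2.timestamp)

def FairOnBids (B : List Bid) (M : List Transaction) : Prop :=
  ∀ b1 ∈ B, ∀ b2 ∈ B, MoreCompetitiveBid b1 b2 → 1 ≤ QtyBid b2 M →
    QtyBid b1 M = b1.quantity

def FairOnAsks (A : List Ask) (M : List Transaction) : Prop :=
  ∀ a1 ∈ A, ∀ a2 ∈ A, MoreCompetitiveAsk a1 a2 → 1 ≤ QtyAsk a2 M →
    QtyAsk a1 M = a1.quantity

def IsFair (B : List Bid) (A : List Ask) (M : List Transaction) : Prop :=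
  FairOnBids B M ∧ FairOnAsks A M

/-- "at least as competitive as" order on bids (for sorting, most competitive first). -/
def BidGE (b1 b2 : Bid) : Prop := ¬ MoreCompetitiveBid b2 b1

/-- "at least as competitive as" order on asks (for sorting, most competitive first). -/
def AskGE (a1 a2 : Ask) : Prop := ¬ MoreCompetitiveAsk a2 a1

namespace FairAux


set_option linter.unusedSectionVars false

variable {α : Type} [DecidableEq α]

/-- total quantity of a list of orders -/
def Qs (q : α → ℕ) (l : List α) : ℕ := (l.map q).sum

/-- the order occupying unit `t` when orders in `l` are laid out consecutively -/
def pick (q : α → ℕ) (d : α) : List α → ℕ → α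
  | [], _ => d
  | x :: xs, t => if t < q x then x else pick q d xs (t - q x)

/-- cumulative quantity strictly before `b` in `l` -/
def pre (q : α → ℕ) : List α → α → ℕ
  | [], _ => 0
  | x :: xs, b => if x = b then 0 else q x + pre q xs b

lemma pick_mem (q : α → ℕ) (d : α) :
    ∀ (l : List α) (t : ℕ), t < Qs q l → pick q d l t ∈ l := by
  intro l
  induction l with
  | nil => intro t ht; simp [Qs] at ht
  | cons x xs ih =>
    intro t ht
    by_cases h : t < q x
    · simp [pick, h]
    · simp only [pick, h, if_false]
      have : t - q x < Qs q xs := by simp [Qs] at ht ⊢; omega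
      exact List.mem_cons_of_mem _ (ih _ this)

lemma pick_eq_iff (q : α → ℕ) (d : α) :
    ∀ (l : List α), l.Nodup → ∀ b ∈ l, ∀ t, t < Qs q l →
      (pick q d l t = b ↔ pre q l b ≤ t ∧ t < pre q l b + q b) := by
  intro l
  induction l with
  | nil => intro _ b hb; simp at hb
  | cons x xs ih =>
    intro hnd b hb t ht
    rcases List.nodup_cons.mp hnd with ⟨hx, hnd'⟩
    by_cases h : t < q x
    · simp only [pick, h, if_true]
      by_cases hxb : x = b
      · subst hxb; simp [pre]; omega
      · simp only [pre, if_neg hxb]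
        constructor
        · intro he; exact absurd he hxb
        · intro hcon; omega
    · simp only [pick, h, if_false]
      have ht' : t - q x < Qs q xs := by simp [Qs] at ht ⊢; omega
      by_cases hxb : x = b
      · subst hxb
        have : pick q d xs (t - q x) ∈ xs := pick_mem q d xs _ ht'
        constructor
        · intro he; rw [he] at this; exact absurd this hx
        · intro hcon; simp [pre] at hcon; omega
      · have hb' : b ∈ xs := by cases hb with
          | head => exact absurd rfl hxb
          | tail _ h => exact h
        rw [ih hnd' b hb' _ ht']
        simp only [pre, if_neg hxb]
        omega

lemma pre_lt {R : α → α → Prop} (q : α → ℕ) (hrefl : ∀ x, R x x) :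
    ∀ (l : List α), l.Pairwise R → ∀ b1 ∈ l, ∀ b2 ∈ l, ¬ R b2 b1 →
      pre q l b1 + q b1 ≤ pre q l b2 := by
  intro l
  induction l with
  | nil => intro _ b1 hb1; simp at hb1
  | cons x xs ih =>
    intro hpw b1 hb1 b2 hb2 hR
    rcases List.pairwise_cons.mp hpw with ⟨hhead, hpw'⟩
    by_cases h1 : x = b1
    · by_cases h2 : x = b2
      · exfalso; exact hR (h2 ▸ h1 ▸ hrefl x)
      · subst h1; simp [pre, h2]
    · by_cases h2 : x = b2
      · exfalso
        have hb1' : b1 ∈ xs := by cases hb1 with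
          | head => exact absurd rfl h1
          | tail _ h => exact h
        exact hR (h2 ▸ hhead b1 hb1')
      · have hb1' : b1 ∈ xs := by cases hb1 with
          | head => exact absurd rfl h1
          | tail _ h => exact h
        have hb2' : b2 ∈ xs := by cases hb2 with
          | head => exact absurd rfl h2
          | tail _ h => exact h
        have := ih hpw' b1 hb1' b2 hb2' hR
        simp [pre, if_neg h1, if_neg h2]; omega

lemma filter_le_pre {R : α → α → Prop} (q : α → ℕ) (P : α → Bool) :
    ∀ (l : List α), l.Pairwise R → ∀ b ∈ l, P b = false →
      (∀ x, R b x → P x = false) →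
      Qs q (l.filter P) ≤ pre q l b := by
  intro l
  induction l with
  | nil => intro _ b hb; simp at hb
  | cons x xs ih =>
    intro hpw b hb hPb hcl
    rcases List.pairwise_cons.mp hpw with ⟨hhead, hpw'⟩
    by_cases h1 : x = b
    · subst h1
      have : (x :: xs).filter P = [] := by
        apply List.filter_eq_nil_iff.mpr
        intro a ha
        cases ha with
        | head => simp [hPb]
        | tail _ h => simp [hcl a (hhead a h)]
      rw [this]; simp [Qs, pre]
    · have hb' : b ∈ xs := by cases hb with
        | head => exact absurd rfl h1
        | tail _ h => exact h
      have IH := ih hpw' b hb' hPb hcl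
      simp only [pre, if_neg h1]
      by_cases hPx : P x <;> simp [List.filter_cons, hPx, Qs] at IH ⊢ <;> omega

lemma count_Ico (a b : ℕ) : ∀ n : ℕ,
    ((List.range n).filter (fun t => decide (a ≤ t ∧ t < b))).length
      = min b n - min a n := by
  intro n
  induction n with
  | zero => simp
  | succ n ih =>
    rw [List.range_succ, List.filter_append, List.length_append, ih]
    by_cases h : a ≤ n ∧ n < b <;> simp [h] <;> omega

lemma reflect_count (n : ℕ) (p : ℕ → Bool) :
    ((List.range n).filter (fun t => p (n - 1 - t))).length
      = ((List.range n).filter p).length := by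
  have hmap : (List.range n).map (fun t => n - 1 - t) = (List.range n).reverse := by
    apply List.ext_getElem
    · simp
    · intro i h1 h2
      simp only [List.getElem_map, List.getElem_range, List.getElem_reverse,
        List.length_range, List.length_map]
  rw [← List.countP_eq_length_filter, ← List.countP_eq_length_filter]
  have := List.countP_map (p := p) (f := fun t => n - 1 - t) (l := List.range n)
  rw [hmap] at this
  rw [List.countP_reverse] at this
  simpa [Function.comp_def] using this.symm

end FairAux

namespace FairAux

set_option linter.unusedSectionVars false

lemma sum_map_one {β : Type} (l : List β) : (l.map (fun _ => (1:ℕ))).sum = l.length := by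
  induction l with
  | nil => rfl
  | cons x xs ih => simp [ih, Nat.add_comm]

lemma Qty_filter_mono (p r : Transaction → Bool) (h : ∀ m, p m = true → r m = true) :
    ∀ M : List Transaction, Qty (M.filter p) ≤ Qty (M.filter r) := by
  intro M
  induction M with
  | nil => simp
  | cons m ms ih =>
    by_cases hp : p m = true
    · have hr := h m hp
      simp [List.filter_cons, hp, hr, Qty] at ih ⊢; omega
    · simp only [Bool.not_eq_true] at hp
      by_cases hr : r m = true <;>
        simp [List.filter_cons, hp, hr, Qty] at ih ⊢ <;> omega

lemma Qty_split_le (p1 p2 : Transaction → Bool) :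
    ∀ M : List Transaction, (∀ m ∈ M, p1 m = true ∨ p2 m = true) →
      Qty M ≤ Qty (M.filter p1) + Qty (M.filter p2) := by
  intro M
  induction M with
  | nil => simp
  | cons m ms ih =>
    intro h
    have hm := h m List.mem_cons_self
    have ih' := ih (fun m' hm' => h m' (List.mem_cons_of_mem _ hm'))
    rcases hm with hp | hp <;>
      by_cases h2 : p1 m = true <;> by_cases h3 : p2 m = true <;>
      simp_all [List.filter_cons, Qty] <;> omega

lemma Qty_filter_split (p r : Transaction → Bool) :
    ∀ M : List Transaction, Qty (M.filter p)
      = Qty (M.filter (fun m => p m && r m)) + Qty (M.filter (fun m => p m && !r m)) := by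
  intro M
  induction M with
  | nil => simp [Qty]
  | cons m ms ih =>
    by_cases h2 : p m = true <;> by_cases h3 : r m = true <;>
      simp_all [List.filter_cons, Qty] <;> omega

lemma Qty_filter_comm (p r : Transaction → Bool) (M : List Transaction) :
    (M.filter r).filter p = M.filter (fun m => p m && r m) := by
  rw [List.filter_filter]

lemma vol_le {α : Type} [DecidableEq α] (fm : Transaction → α) (q : α → ℕ) (P : α → Bool) :
    ∀ (B : List α) (M : List Transaction),
      (∀ m ∈ M, P (fm m) = true → fm m ∈ B) →
      (∀ b ∈ B, Qty (M.filter (fun m => decide (fm m = b))) ≤ q b) →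
      Qty (M.filter (fun m => P (fm m))) ≤ Qs q (B.filter P) := by
  intro B
  induction B with
  | nil =>
    intro M hmem _
    have : M.filter (fun m => P (fm m)) = [] := by
      apply List.filter_eq_nil_iff.mpr
      intro m hm hPm
      exact absurd (hmem m hm hPm) List.not_mem_nil
    simp [this, Qty, Qs]
  | cons b Bs ih =>
    intro M hmem hcap
    have hsplit := Qty_filter_split (fun m => P (fm m)) (fun m => decide (fm m = b)) M
    have h1 : Qty (M.filter (fun m => P (fm m) && decide (fm m = b)))
        ≤ Qty (M.filter (fun m => decide (fm m = b))) :=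
      Qty_filter_mono _ _ (by intro m hm; exact (Bool.and_elim_right hm)) M
    have hM2 := ih (M.filter (fun m => !decide (fm m = b)))
      (by
        intro m hm hPm
        rcases List.mem_filter.mp hm with ⟨hmM, hne⟩
        have := hmem m hmM hPm
        rcases List.mem_cons.mp this with h | h
        · exfalso; simp [h] at hne
        · exact h)
      (by
        intro b' hb'
        calc Qty ((M.filter (fun m => !decide (fm m = b))).filter (fun m => decide (fm m = b')))
            = Qty (M.filter (fun m => decide (fm m = b') && !decide (fm m = b))) := by
              rw [Qty_filter_comm]
          _ ≤ Qty (M.filter (fun m => decide (fm m = b'))) :=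
              Qty_filter_mono _ _ (by intro m hm; exact Bool.and_elim_left hm) M
          _ ≤ q b' := hcap b' (List.mem_cons_of_mem _ hb'))
    rw [Qty_filter_comm] at hM2
    have heq : (fun m => P (fm m) && !decide (fm m = b))
        = (fun m => (fun m => P (fm m)) m && (fun m => !decide (fm m = b)) m) := rfl
    by_cases hPb : P b = true
    · have : Qty (M.filter (fun m => P (fm m) && decide (fm m = b))) ≤ q b :=
        le_trans h1 (hcap b List.mem_cons_self)
      have hrhs : Qs q ((b :: Bs).filter P) = q b + Qs q (Bs.filter P) := by
        simp [List.filter_cons, hPb, Qs]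
      rw [hrhs, hsplit]
      have h2 : Qty (M.filter (fun m => P (fm m) && !decide (fm m = b)))
          ≤ Qs q (Bs.filter P) := hM2
      omega
    · have hz : M.filter (fun m => P (fm m) && decide (fm m = b)) = [] := by
        apply List.filter_eq_nil_iff.mpr
        intro m hm hc
        have h1' := Bool.and_elim_left hc
        have h2' := of_decide_eq_true (Bool.and_elim_right hc)
        rw [h2'] at h1'
        exact hPb h1'
      have hrhs : Qs q ((b :: Bs).filter P) = Qs q (Bs.filter P) := by
        simp only [Bool.not_eq_true] at hPb
        simp [List.filter_cons, hPb]
      rw [hrhs, hsplit, hz]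
      have h2 : Qty (M.filter (fun m => P (fm m) && !decide (fm m = b)))
          ≤ Qs q (Bs.filter P) := hM2
      have h0 : Qty ([] : List Transaction) = 0 := rfl
      omega

end FairAux

instance : DecidableRel MoreCompetitiveBid := fun a b => by
  unfold MoreCompetitiveBid; infer_instance

instance : DecidableRel MoreCompetitiveAsk := fun a b => by
  unfold MoreCompetitiveAsk; infer_instance

instance : DecidableRel BidGE := fun a b => by
  unfold BidGE; infer_instance

instance : DecidableRel AskGE := fun a b => by
  unfold AskGE; infer_instance

lemma bidGE_refl : ∀ x : Bid, BidGE x x := by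
  intro x; unfold BidGE MoreCompetitiveBid; omega

lemma askGE_refl : ∀ x : Ask, AskGE x x := by
  intro x; unfold AskGE MoreCompetitiveAsk; omega

instance : IsTotal Bid BidGE :=
  ⟨by intro a b; unfold BidGE MoreCompetitiveBid; omega⟩

instance : IsTrans Bid BidGE :=
  ⟨by intro a b c; unfold BidGE MoreCompetitiveBid; omega⟩

instance : IsTotal Ask AskGE :=
  ⟨by intro a b; unfold AskGE MoreCompetitiveAsk; omega⟩

instance : IsTrans Ask AskGE :=
  ⟨by intro a b c; unfold AskGE MoreCompetitiveAsk; omega⟩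

theorem statement_11 (B : List Bid) (A : List Ask) (M : List Transaction)
    (hB : (B.map Bid.id).Nodup) (hA : (A.map Ask.id).Nodup)
    (hM : Matching B A M) :
    ∃ M', Matching B A M' ∧ IsFair B A M' ∧ Qty M' = Qty M := by
  classical
  obtain ⟨hmat, hbidmem, haskmem, hcapb, hcapa⟩ := hM
  set n := Qty M with hn
  set lB := List.insertionSort BidGE B with hlB
  set lA := List.insertionSort AskGE A with hlA
  have permB : lB.Perm B := List.perm_insertionSort _ _
  have permA : lA.Perm A := List.perm_insertionSort _ _
  have ndB : B.Nodup := List.Nodup.of_map _ hB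
  have ndA : A.Nodup := List.Nodup.of_map _ hA
  have ndlB : lB.Nodup := (permB.nodup_iff).mpr ndB
  have ndlA : lA.Nodup := (permA.nodup_iff).mpr ndA
  have sortedB : lB.Pairwise BidGE := List.pairwise_insertionSort _ _
  have sortedA : lA.Pairwise AskGE := List.pairwise_insertionSort _ _
  have beqB : ∀ (x y : Bid), (x == y) = decide (x = y) := fun _ _ => rfl
  have beqA : ∀ (x y : Ask), (x == y) = decide (x = y) := fun _ _ => rfl
  -- volume bounds via vol_le
  have hvolB : ∀ P : Bid → Bool,
      Qty (M.filter (fun m => P m.bid)) ≤ FairAux.Qs Bid.quantity (B.filter P) := by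
    intro P
    apply FairAux.vol_le Transaction.bid Bid.quantity P B M
      (fun m hm _ => hbidmem m hm)
    intro b hb
    have := hcapb b hb
    simpa [QtyBid, Qty, beqB] using this
  have hvolA : ∀ P : Ask → Bool,
      Qty (M.filter (fun m => P m.ask)) ≤ FairAux.Qs Ask.quantity (A.filter P) := by
    intro P
    apply FairAux.vol_le Transaction.ask Ask.quantity P A M
      (fun m hm _ => haskmem m hm)
    intro a ha
    have := hcapa a ha
    simpa [QtyAsk, Qty, beqA] using this
  have hQsB : FairAux.Qs Bid.quantity lB = FairAux.Qs Bid.quantity B :=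
    List.Perm.sum_eq (permB.map _)
  have hQsA : FairAux.Qs Ask.quantity lA = FairAux.Qs Ask.quantity A :=
    List.Perm.sum_eq (permA.map _)
  have hnB : n ≤ FairAux.Qs Bid.quantity lB := by
    have h1 : Qty (M.filter (fun _ => true)) ≤ FairAux.Qs Bid.quantity (B.filter (fun _ => true)) :=
      hvolB (fun _ => true)
    simpa [hQsB] using h1
  have hnA : n ≤ FairAux.Qs Ask.quantity lA := by
    have h1 : Qty (M.filter (fun _ => true)) ≤ FairAux.Qs Ask.quantity (A.filter (fun _ => true)) :=
      hvolA (fun _ => true)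
    simpa [hQsA] using h1
  set dB : Bid := ⟨0,0,0,0⟩ with hdB
  set dA : Ask := ⟨0,0,0,0⟩ with hdA
  set f : ℕ → Transaction :=
    fun t => ⟨FairAux.pick Bid.quantity dB lB t, FairAux.pick Ask.quantity dA lA (n - 1 - t), 1, 0⟩
    with hf
  refine ⟨(List.range n).map f, ?_, ?_, ?_⟩
  · -- Matching
    have cntB : ∀ b : Bid, QtyBid b ((List.range n).map f)
        = ((List.range n).filter (fun t => decide (FairAux.pick Bid.quantity dB lB t = b))).length := by
      intro b
      unfold QtyBid
      rw [List.filter_map, List.map_map]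
      have : Transaction.quantity ∘ f = fun _ => (1:ℕ) := rfl
      rw [this, FairAux.sum_map_one]
      congr 1
    have cntA : ∀ a : Ask, QtyAsk a ((List.range n).map f)
        = ((List.range n).filter (fun s => decide (FairAux.pick Ask.quantity dA lA s = a))).length := by
      intro a
      unfold QtyAsk
      rw [List.filter_map, List.map_map]
      have : Transaction.quantity ∘ f = fun _ => (1:ℕ) := rfl
      rw [this, FairAux.sum_map_one]
      rw [← FairAux.reflect_count n (fun s => decide (FairAux.pick Ask.quantity dA lA s = a))]
      congr 1
    have formB : ∀ b ∈ lB, QtyBid b ((List.range n).map f)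
        = min (FairAux.pre Bid.quantity lB b + b.quantity) n - min (FairAux.pre Bid.quantity lB b) n := by
      intro b hb
      rw [cntB b, ← FairAux.count_Ico]
      congr 1
      apply List.filter_congr
      intro t ht
      have ht' : t < n := List.mem_range.mp ht
      have := FairAux.pick_eq_iff Bid.quantity dB lB ndlB b hb t (lt_of_lt_of_le ht' hnB)
      exact decide_eq_decide.mpr this
    have formA : ∀ a ∈ lA, QtyAsk a ((List.range n).map f)
        = min (FairAux.pre Ask.quantity lA a + a.quantity) n - min (FairAux.pre Ask.quantity lA a) n := by
      intro a ha
      rw [cntA a, ← FairAux.count_Ico]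
      congr 1
      apply List.filter_congr
      intro s hs
      have hs' : s < n := List.mem_range.mp hs
      have := FairAux.pick_eq_iff Ask.quantity dA lA ndlA a ha s (lt_of_lt_of_le hs' hnA)
      exact decide_eq_decide.mpr this
    refine ⟨?_, ?_, ?_, ?_, ?_⟩
    · -- matchable
      intro m hm
      rcases List.mem_map.mp hm with ⟨t, htr, hft⟩
      have ht : t < n := List.mem_range.mp htr
      subst hft
      show (FairAux.pick Ask.quantity dA lA (n - 1 - t)).price
        ≤ (FairAux.pick Bid.quantity dB lB t).price
      by_contra hcon
      push_neg at hcon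
      set b := FairAux.pick Bid.quantity dB lB t with hbdef
      set a := FairAux.pick Ask.quantity dA lA (n - 1 - t) with hadef
      have hbmem : b ∈ lB := FairAux.pick_mem _ _ _ _ (lt_of_lt_of_le ht hnB)
      have hamem : a ∈ lA := FairAux.pick_mem _ _ _ _ (lt_of_lt_of_le (by omega) hnA)
      have hpb : FairAux.pre Bid.quantity lB b ≤ t :=
        ((FairAux.pick_eq_iff Bid.quantity dB lB ndlB b hbmem t (lt_of_lt_of_le ht hnB)).mp rfl).1
      have hpa : FairAux.pre Ask.quantity lA a ≤ n - 1 - t :=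
        ((FairAux.pick_eq_iff Ask.quantity dA lA ndlA a hamem (n-1-t)
          (lt_of_lt_of_le (by omega) hnA)).mp rfl).1
      set P1 : Bid → Bool := fun x => decide (b.price < x.price) with hP1
      set P2 : Ask → Bool := fun x => decide (x.price < a.price) with hP2
      have hsplit : Qty M ≤ Qty (M.filter (fun m => P1 m.bid)) + Qty (M.filter (fun m => P2 m.ask)) := by
        apply FairAux.Qty_split_le
        intro m' hm'
        by_cases h : b.price < m'.bid.price
        · left; simp [hP1, h]
        · right
          have := hmat m' hm'
          simp [hP2]
          omega
      have h5 : FairAux.Qs Bid.quantity (lB.filter P1) ≤ FairAux.pre Bid.quantity lB b := by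
        apply FairAux.filter_le_pre Bid.quantity P1 lB sortedB b hbmem
        · simp [hP1]
        · intro x hx
          simp only [hP1, decide_eq_false_iff_not, not_lt]
          unfold BidGE MoreCompetitiveBid at hx
          omega
      have h6 : FairAux.Qs Ask.quantity (lA.filter P2) ≤ FairAux.pre Ask.quantity lA a := by
        apply FairAux.filter_le_pre Ask.quantity P2 lA sortedA a hamem
        · simp [hP2]
        · intro x hx
          simp only [hP2, decide_eq_false_iff_not, not_lt]
          unfold AskGE MoreCompetitiveAsk at hx
          omega
      have h7 : FairAux.Qs Bid.quantity (B.filter P1) = FairAux.Qs Bid.quantity (lB.filter P1) :=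
        (List.Perm.sum_eq ((permB.filter P1).map _)).symm
      have h8 : FairAux.Qs Ask.quantity (A.filter P2) = FairAux.Qs Ask.quantity (lA.filter P2) :=
        (List.Perm.sum_eq ((permA.filter P2).map _)).symm
      have hv1 := hvolB P1
      have hv2 := hvolA P2
      have : n ≤ t + (n - 1 - t) := by
        rw [hn]
        calc Qty M ≤ _ + _ := hsplit
          _ ≤ FairAux.Qs Bid.quantity (B.filter P1) + FairAux.Qs Ask.quantity (A.filter P2) :=
              Nat.add_le_add hv1 hv2
          _ = FairAux.Qs Bid.quantity (lB.filter P1) + FairAux.Qs Ask.quantity (lA.filter P2) := by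
              rw [h7, h8]
          _ ≤ FairAux.pre Bid.quantity lB b + FairAux.pre Ask.quantity lA a :=
              Nat.add_le_add h5 h6
          _ ≤ t + (n - 1 - t) := Nat.add_le_add hpb hpa
      omega
    · -- bids in B
      intro m hm
      rcases List.mem_map.mp hm with ⟨t, htr, hft⟩
      have ht : t < n := List.mem_range.mp htr
      subst hft
      exact permB.subset (FairAux.pick_mem _ _ _ _ (lt_of_lt_of_le ht hnB))
    · -- asks in A
      intro m hm
      rcases List.mem_map.mp hm with ⟨t, htr, hft⟩
      have ht : t < n := List.mem_range.mp htr
      subst hft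
      exact permA.subset (FairAux.pick_mem _ _ _ _ (lt_of_lt_of_le (by omega) hnA))
    · -- bid caps
      intro b hbB
      rw [formB b (permB.mem_iff.mpr hbB)]
      omega
    · -- ask caps
      intro a haA
      rw [formA a (permA.mem_iff.mpr haA)]
      omega
  · -- fairness
    have cntB : ∀ b : Bid, QtyBid b ((List.range n).map f)
        = ((List.range n).filter (fun t => decide (FairAux.pick Bid.quantity dB lB t = b))).length := by
      intro b
      unfold QtyBid
      rw [List.filter_map, List.map_map]
      have : Transaction.quantity ∘ f = fun _ => (1:ℕ) := rfl
      rw [this, FairAux.sum_map_one]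
      congr 1
    have cntA : ∀ a : Ask, QtyAsk a ((List.range n).map f)
        = ((List.range n).filter (fun s => decide (FairAux.pick Ask.quantity dA lA s = a))).length := by
      intro a
      unfold QtyAsk
      rw [List.filter_map, List.map_map]
      have : Transaction.quantity ∘ f = fun _ => (1:ℕ) := rfl
      rw [this, FairAux.sum_map_one]
      rw [← FairAux.reflect_count n (fun s => decide (FairAux.pick Ask.quantity dA lA s = a))]
      congr 1
    have formB : ∀ b ∈ lB, QtyBid b ((List.range n).map f)
        = min (FairAux.pre Bid.quantity lB b + b.quantity) n - min (FairAux.pre Bid.quantity lB b) n := by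
      intro b hb
      rw [cntB b, ← FairAux.count_Ico]
      congr 1
      apply List.filter_congr
      intro t ht
      have ht' : t < n := List.mem_range.mp ht
      have := FairAux.pick_eq_iff Bid.quantity dB lB ndlB b hb t (lt_of_lt_of_le ht' hnB)
      exact decide_eq_decide.mpr this
    have formA : ∀ a ∈ lA, QtyAsk a ((List.range n).map f)
        = min (FairAux.pre Ask.quantity lA a + a.quantity) n - min (FairAux.pre Ask.quantity lA a) n := by
      intro a ha
      rw [cntA a, ← FairAux.count_Ico]
      congr 1
      apply List.filter_congr
      intro s hs
      have hs' : s < n := List.mem_range.mp hs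
      have := FairAux.pick_eq_iff Ask.quantity dA lA ndlA a ha s (lt_of_lt_of_le hs' hnA)
      exact decide_eq_decide.mpr this
    constructor
    · -- FairOnBids
      intro b1 hb1 b2 hb2 hmc hq2
      have hb1' : b1 ∈ lB := permB.mem_iff.mpr hb1
      have hb2' : b2 ∈ lB := permB.mem_iff.mpr hb2
      have hpre : FairAux.pre Bid.quantity lB b1 + b1.quantity ≤ FairAux.pre Bid.quantity lB b2 :=
        FairAux.pre_lt Bid.quantity bidGE_refl lB sortedB b1 hb1' b2 hb2'
          (fun h => h hmc)
      rw [formB b2 hb2'] at hq2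
      rw [formB b1 hb1']
      omega
    · -- FairOnAsks
      intro a1 ha1 a2 ha2 hmc hq2
      have ha1' : a1 ∈ lA := permA.mem_iff.mpr ha1
      have ha2' : a2 ∈ lA := permA.mem_iff.mpr ha2
      have hpre : FairAux.pre Ask.quantity lA a1 + a1.quantity ≤ FairAux.pre Ask.quantity lA a2 :=
        FairAux.pre_lt Ask.quantity askGE_refl lA sortedA a1 ha1' a2 ha2'
          (fun h => h hmc)
      rw [formA a2 ha2'] at hq2
      rw [formA a1 ha1']
      omega
  · -- total quantity
    show Qty ((List.range n).map f) = Qty M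
    unfold Qty
    rw [List.map_map]
    have : Transaction.quantity ∘ f = fun _ => (1:ℕ) := rfl
    rw [this, FairAux.sum_map_one, List.length_range]
    exact hn
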